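/- Let φ be the piecewise function φ(λ) = (3/5)λ + 3/4 on [0, 25/48], φ(λ) = 3λ + 2(1 − √(3λ)) on [25/48, 3/4], φ(λ) = λ + 1/2 on [3/4, 1]. Then for every ε > 0 and every λ with 0 ≤ λ ≤ (17 + 4√15)/49 − ε, one has φ(λ) − λ/2 ≤ 1 − ε/10 and φ(λ) + λ/2 ≤ 3/2 − ε/10. -/

import Mathlib

/-!
Both `φ(λ) - λ/2` and `φ(λ) + λ/2` grow with slope at least `1/10`, because `φ` is continuous and
each of its three pieces has slope at least `3/5`. Comparing with the values `φ(1) - 1/2 = 1` and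
`φ(λ₂) + λ₂/2 = 3/2` at `λ₂ = (17 + 4√15)/49 < 1` then loses `ε/10` for every `ε` by which `λ`
stays below `λ₂`.
-/

/-- The zero-density exponent function `φ`. -/
noncomputable def phiExp (l : ℝ) : ℝ :=
  if l ≤ 25/48 then 3/5 * l + 3/4
  else if l ≤ 3/4 then 3 * l + 2 * (1 - Real.sqrt (3 * l))
  else l + 1/2

open Real Set

theorem phiExp_of_le {l : ℝ} (h : l ≤ 25/48) : phiExp l = 3/5 * l + 3/4 :=
  if_pos h

theorem phiExp_of_mem_Icc {l : ℝ} (h : l ∈ Icc (25/48) (3/4)) :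
    phiExp l = 3 * l + 2 * (1 - √(3 * l)) := by
  rcases h.1.eq_or_lt with rfl | hlt
  · have : √(3 * (25/48 : ℝ)) = 5/4 := by
      rw [sqrt_eq_iff_eq_sq] <;> norm_num
    rw [phiExp_of_le le_rfl, this]
    norm_num
  · simp only [phiExp, if_neg hlt.not_ge, if_pos h.2]

theorem phiExp_of_ge {l : ℝ} (h : 3/4 ≤ l) : phiExp l = l + 1/2 := by
  rcases h.eq_or_lt with rfl | hlt
  · have : √(3 * (3/4 : ℝ)) = 3/2 := by
      rw [sqrt_eq_iff_eq_sq] <;> norm_num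
    rw [phiExp_of_mem_Icc ⟨by norm_num, le_rfl⟩, this]
    norm_num
  · simp only [phiExp, if_neg (hlt.trans' (by norm_num : (25/48 : ℝ) < 3/4)).not_ge,
      if_neg hlt.not_ge]

/-- On the middle piece, writing `s = √(3x) ≤ t = √(3y)` with `s + t ≥ 5/2`, the increment
`(12/5)(y - x) - 2(t - s) = (t - s)((4/5)(s + t) - 2)` is nonnegative. -/
theorem monotoneOn_phiExp_sub_Icc :
    MonotoneOn (fun l => phiExp l - 3/5 * l) (Icc (25/48) (3/4)) := by
  intro x hx y hy hxy
  simp only [phiExp_of_mem_Icc hx, phiExp_of_mem_Icc hy]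
  have hs : 5/4 ≤ √(3 * x) := le_sqrt_of_sq_le (by linarith [hx.1])
  have hst : √(3 * x) ≤ √(3 * y) := sqrt_le_sqrt (by linarith)
  have hx2 : √(3 * x) ^ 2 = 3 * x := sq_sqrt (by linarith [hx.1])
  have hy2 : √(3 * y) ^ 2 = 3 * y := sq_sqrt (by linarith [hy.1])
  nlinarith [mul_nonneg (sub_nonneg.2 hst) (by linarith : (0 : ℝ) ≤ √(3 * x) + √(3 * y) - 5/2)]

theorem monotone_phiExp_sub : Monotone (fun l => phiExp l - 3/5 * l) := by
  refine MonotoneOn.Iic_union_Ici (a := 25/48) ?_ ?_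
  · intro x hx y hy _
    simp only [phiExp_of_le hx, phiExp_of_le hy]
    linarith
  · have hright : MonotoneOn (fun l => phiExp l - 3/5 * l) (Ici (3/4)) := by
      intro x hx y hy hxy
      simp only [phiExp_of_ge hx, phiExp_of_ge hy]
      linarith
    rw [← Icc_union_Ici_eq_Ici (by norm_num : (25/48 : ℝ) ≤ 3/4)]
    exact monotoneOn_phiExp_sub_Icc.union_right hright (isGreatest_Icc (by norm_num)) isLeast_Ici

theorem phiExp_sub_phiExp_ge {x y : ℝ} (h : x ≤ y) : 3/5 * (y - x) ≤ phiExp y - phiExp x := by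
  have := monotone_phiExp_sub h
  simp only at this
  linarith

theorem phiExp_one : phiExp 1 = 3/2 := by
  rw [phiExp_of_ge (by norm_num)]
  norm_num

noncomputable def lambda2 : ℝ := (17 + 4 * √15) / 49

theorem sqrt_fifteen_bounds : 3.8 < √15 ∧ √15 < 3.9 := by
  constructor
  · rw [lt_sqrt (by norm_num)]; norm_num
  · rw [sqrt_lt' (by norm_num)]; norm_num

theorem lambda2_lt_one : lambda2 < 1 := by
  rw [lambda2]
  linarith [sqrt_fifteen_bounds.2]

theorem sqrt_three_mul_lambda2 : √(3 * lambda2) = (6 + √15) / 7 := by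
  have h15 : √15 ^ 2 = 15 := sq_sqrt (by norm_num)
  rw [sqrt_eq_iff_eq_sq (by rw [lambda2]; positivity) (by positivity), lambda2]
  linear_combination (-1/49 : ℝ) * h15

theorem phiExp_lambda2_add_half : phiExp lambda2 + lambda2 / 2 = 3/2 := by
  have hmem : lambda2 ∈ Icc (25/48) (3/4) := by
    rw [lambda2]
    constructor <;> linarith [sqrt_fifteen_bounds.1, sqrt_fifteen_bounds.2]
  rw [phiExp_of_mem_Icc hmem, sqrt_three_mul_lambda2, lambda2]
  ring

theorem phiExp_bounds_below_lambda2 :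
    ∀ ε : ℝ, 0 < ε → ∀ l : ℝ, 0 ≤ l → l ≤ (17 + 4 * Real.sqrt 15)/49 - ε →
      phiExp l - l/2 ≤ 1 - ε/10 ∧ phiExp l + l/2 ≤ 3/2 - ε/10 := by
  intro ε hε l _ hl
  replace hl : l ≤ lambda2 - ε := hl
  have hl1 : l ≤ 1 := by linarith [lambda2_lt_one]
  constructor
  · linarith [phiExp_sub_phiExp_ge hl1, phiExp_one, lambda2_lt_one]
  · linarith [phiExp_sub_phiExp_ge (by linarith : l ≤ lambda2), phiExp_lambda2_add_half]
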